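/- Let ℱ be a class of R-modules closed under extensions, E an injective R-module, and ε : M → E an ℱ-cover of E. Then Ext¹_R(F, M) = 0 for every F ∈ ℱ. -/

import Mathlib

/-!
If `0 → M → X → F → 0` is exact with `F ∈ ℱ`, then `X ∈ ℱ`. Injectivity of `E` extends `ε`
over `X`, the precover property factors that extension back through `ε` as `g : X → M`, and then
`(ι ≫ g) ≫ ε = ε` makes `ι ≫ g` an automorphism of `M` by the cover property: every such extension
splits. Computing `Ext¹(F, M)` from a projective resolution `P`, a cocycle `f : P₁ → M` extends
over `d : P₁ → P₀` as soon as the pushout of `d` and `f`, an extension of `F` by `M`, splits.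
-/

open CategoryTheory Opposite

universe u

theorem isSplitMono_of_cover_of_injective {C : Type*} [Category C] (ℱ : Set C)
    {E M X : C} [Injective E] (ε : M ⟶ E)
    (hpre : ∀ F' ∈ ℱ, ∀ f : F' ⟶ E, ∃ g : F' ⟶ M, g ≫ ε = f)
    (hcov : ∀ α : M ⟶ M, α ≫ ε = ε → IsIso α) (hX : X ∈ ℱ) (ι : M ⟶ X) [Mono ι] :
    IsSplitMono ι := by
  obtain ⟨g, hg⟩ := hpre X hX (Injective.factorThru ε ι)
  have : IsIso (ι ≫ g) := hcov _ (by rw [Category.assoc, hg, Injective.comp_factorThru])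
  exact IsSplitMono.mk' ⟨g ≫ inv (ι ≫ g), by rw [← Category.assoc, IsIso.hom_inv_id]⟩

theorem CategoryTheory.ProjectiveResolution.subsingleton_ext_one {A : Type*} [Ring A]
    {C : Type*} [Category C] [Abelian C] [Linear A C] [EnoughProjectives C] {X Y : C}
    (P : ProjectiveResolution X)
    (h : ∀ f : P.complex.X 1 ⟶ Y, P.complex.d 2 1 ≫ f = 0 →
      ∃ g : P.complex.X 0 ⟶ Y, P.complex.d 1 0 ≫ g = f) :
    Subsingleton (((Ext A C 1).obj (op X)).obj Y) := by
  rw [← ModuleCat.isZero_iff_subsingleton]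
  refine Limits.IsZero.of_iso ?_ (P.isoExt 1 Y)
  rw [← HomologicalComplex.exactAt_iff_isZero_homology,
    HomologicalComplex.exactAt_iff' _ 0 1 2 (by simp) (by simp), ShortComplex.moduleCat_exact_iff]
  exact h

namespace LinearMap

variable {R : Type*} [Ring R] {P₁ P₀ M N : Type*} [AddCommGroup P₁] [Module R P₁]
  [AddCommGroup P₀] [Module R P₀] [AddCommGroup M] [Module R M] [AddCommGroup N] [Module R N]
  (d : P₁ →ₗ[R] P₀) (f : P₁ →ₗ[R] M)

/-- The pushout of `d` and `f` is `(P₀ × M) ⧸ pushoutRel d f`. -/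
def pushoutRel : Submodule R (P₀ × M) := range (d.prod (-f))

def pushoutInl : P₀ →ₗ[R] (P₀ × M) ⧸ d.pushoutRel f := (d.pushoutRel f).mkQ ∘ₗ inl R P₀ M

def pushoutInr : M →ₗ[R] (P₀ × M) ⧸ d.pushoutRel f := (d.pushoutRel f).mkQ ∘ₗ inr R P₀ M

def pushoutDesc (a : P₀ →ₗ[R] N) (b : M →ₗ[R] N) (h : a ∘ₗ d = b ∘ₗ f) :
    (P₀ × M) ⧸ d.pushoutRel f →ₗ[R] N :=
  (d.pushoutRel f).liftQ (a.coprod b) <| by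
    rintro _ ⟨y, rfl⟩
    simpa [← sub_eq_add_neg, sub_eq_zero] using congr($h y)

theorem pushoutInl_comp : d.pushoutInl f ∘ₗ d = d.pushoutInr f ∘ₗ f := by
  ext y
  simp only [pushoutInl, pushoutInr, coe_comp, Function.comp_apply, Submodule.mkQ_apply,
    inl_apply, inr_apply, Submodule.Quotient.eq]
  exact ⟨y, by simp⟩

theorem pushoutInr_injective (h : ker d ≤ ker f) : Function.Injective (d.pushoutInr f) := by
  rw [← ker_eq_bot, Submodule.eq_bot_iff]
  rintro m hm
  obtain ⟨y, hy⟩ := (Submodule.Quotient.mk_eq_zero _).1 hm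
  obtain ⟨hdy, hfy⟩ := Prod.ext_iff.1 hy
  simp only [prod_apply, Function.prod_apply, neg_apply, inr_apply] at hdy hfy
  rw [← hfy, h hdy, neg_zero]

theorem pushoutDesc_surjective {a : P₀ →ₗ[R] N} (ha : Function.Surjective a) (b : M →ₗ[R] N)
    (h : a ∘ₗ d = b ∘ₗ f) : Function.Surjective (d.pushoutDesc f a b h) := fun n =>
  let ⟨p, hp⟩ := ha n
  ⟨Submodule.Quotient.mk (p, 0), by simpa [pushoutDesc] using hp⟩

theorem exact_pushoutInr_pushoutDesc {π : P₀ →ₗ[R] N} (hπ : range d = ker π)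
    (h : π ∘ₗ d = 0 ∘ₗ f) : Function.Exact (d.pushoutInr f) (d.pushoutDesc f π 0 h) := by
  intro x
  obtain ⟨⟨p, m⟩, rfl⟩ := Submodule.Quotient.mk_surjective _ x
  simp only [pushoutDesc, Submodule.liftQ_apply, coprod_apply, zero_apply, add_zero]
  constructor
  · intro hp
    obtain ⟨y, rfl⟩ : p ∈ range d := hπ ▸ hp
    refine ⟨m + f y, ?_⟩
    simp only [pushoutInr, coe_comp, Function.comp_apply, Submodule.mkQ_apply, inr_apply,
      Submodule.Quotient.eq]
    exact ⟨-y, by simp⟩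
  · rintro ⟨m', hm'⟩
    simpa [pushoutDesc, pushoutInr] using congr(d.pushoutDesc f π 0 h $hm').symm

end LinearMap

theorem ModuleCat.subsingleton_ext_one_of_forall_isSplitMono {R : Type*} [Ring R] [Small.{u} R]
    {F M : ModuleCat.{u} R}
    (hsplit : ∀ (X : ModuleCat.{u} R) (ι : M ⟶ X) (p : X ⟶ F), Function.Injective ι →
      Function.Surjective p → Function.Exact ι p → IsSplitMono ι) :
    Subsingleton (((Ext ℤ (ModuleCat.{u} R) 1).obj (op F)).obj M) := by
  obtain ⟨P⟩ : Nonempty (ProjectiveResolution F) := HasProjectiveResolution.out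
  refine P.subsingleton_ext_one fun f hf => ?_
  set d := (P.complex.d 1 0).hom
  have hker : LinearMap.ker d ≤ LinearMap.ker f.hom := by
    intro x hx
    obtain ⟨z, rfl⟩ : x ∈ LinearMap.range (P.complex.d 2 1).hom :=
      (P.exact_succ 0).moduleCat_range_eq_ker ▸ hx
    exact congr($hf z)
  have hrange : LinearMap.range d = LinearMap.ker (P.π.f 0).hom := P.exact₀.moduleCat_range_eq_ker
  have hπ : Function.Surjective (P.π.f 0) := (ModuleCat.epi_iff_surjective _).1 inferInstance
  have hdπ : (P.π.f 0).hom ∘ₗ d = 0 ∘ₗ f.hom := by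
    ext y
    exact hrange.le ⟨y, rfl⟩
  obtain ⟨⟨r, hr⟩⟩ := hsplit (.of R _) (ofHom (d.pushoutInr f.hom))
    (ofHom (d.pushoutDesc f.hom _ 0 hdπ)) (d.pushoutInr_injective f.hom hker)
    (d.pushoutDesc_surjective f.hom hπ 0 hdπ) (d.exact_pushoutInr_pushoutDesc f.hom hrange hdπ)
  refine ⟨ofHom (d.pushoutInl f.hom) ≫ r, ?_⟩
  have hsq : P.complex.d 1 0 ≫ ofHom (d.pushoutInl f.hom) = f ≫ ofHom (d.pushoutInr f.hom) :=
    ModuleCat.hom_ext (d.pushoutInl_comp f.hom)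
  rw [← Category.assoc, hsq, Category.assoc, hr, Category.comp_id]

/-- If `ℱ` is a class of modules closed under extensions and `ε : M → E` is an
`ℱ`-cover of an injective module `E`, then `Ext¹(F, M) = 0` for all `F ∈ ℱ`. -/
theorem cover_ext_vanish {R : Type u} [Ring R] (ℱ : Set (ModuleCat.{u} R))
    (hext : ∀ (A B C : ModuleCat.{u} R) (ι : A ⟶ B) (π : B ⟶ C),
      A ∈ ℱ → C ∈ ℱ → Function.Injective ι → Function.Surjective π →
      Function.Exact ι π → B ∈ ℱ)
    (E : ModuleCat.{u} R) (hE : Injective E)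
    (M : ModuleCat.{u} R) (hM : M ∈ ℱ) (ε : M ⟶ E)
    (hpre : ∀ F' ∈ ℱ, ∀ f : F' ⟶ E, ∃ g : F' ⟶ M, g ≫ ε = f)
    (hcov : ∀ α : M ⟶ M, α ≫ ε = ε → IsIso α) :
    ∀ F ∈ ℱ, Subsingleton (((Ext ℤ (ModuleCat.{u} R) 1).obj (op F)).obj M) := by
  intro F hF
  refine ModuleCat.subsingleton_ext_one_of_forall_isSplitMono fun X ι p hι hp hιp => ?_
  have : Mono ι := (ModuleCat.mono_iff_injective ι).2 hι
  exact isSplitMono_of_cover_of_injective ℱ ε hpre hcov (hext M X F ι p hM hF hι hp hιp) ι
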